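/- arXiv:1409.5783 — 3 statements merged into one kernel-verified Lean document; each statement's English description precedes it below -/
import Mathlib

section
/- Let m, x, β be positive reals and α a real number such that m + β·ln m > x + β·ln x + α. Then m > x + α/(1 + β/x). -/
/-! The function `f y = y + β log y` is increasing and concave on `(0, ∞)`, with `f' x = 1 + β / x`.
Concavity puts `f` below its tangent line at `x`, so the point `t = x + α / f' x` satisfies
`f t ≤ f x + α < f m`, and monotonicity gives `t < m`. -/

open Real Set

theorem strictMonoOn_add_mul_log {β : ℝ} (hβ : 0 ≤ β) :
    StrictMonoOn (fun y => y + β * log y) (Ioi 0) := by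
  intro a ha b _ hab
  have hlog : β * log a ≤ β * log b := mul_le_mul_of_nonneg_left (log_le_log ha hab.le) hβ
  simp only
  linarith

theorem add_mul_log_le_tangent {x t β : ℝ} (hx : 0 < x) (ht : 0 < t) (hβ : 0 ≤ β) :
    t + β * log t ≤ x + β * log x + (1 + β / x) * (t - x) := by
  have hlog : log t - log x ≤ t / x - 1 := by
    rw [← log_div ht.ne' hx.ne']
    exact log_le_sub_one_of_pos (div_pos ht hx)
  have hscaled : β * (log t - log x) ≤ β * (t / x - 1) := mul_le_mul_of_nonneg_left hlog hβ
  have hslope : β * (t / x - 1) = β / x * (t - x) := by field_simp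
  linarith

theorem stmt_3 (m x β α : ℝ) (hm : 0 < m) (hx : 0 < x) (hβ : 0 < β)
    (h : m + β * Real.log m > x + β * Real.log x + α) :
    m > x + α / (1 + β / x) := by
  set t := x + α / (1 + β / x)
  rcases le_or_gt t 0 with ht | ht
  · linarith
  have hslope : (1 + β / x) * (t - x) = α := by
    have : 0 < 1 + β / x := by positivity
    simp only [t, add_sub_cancel_left]
    field_simp
  have hft : t + β * log t < m + β * log m := by
    linarith [add_mul_log_le_tangent hx ht hβ.le]
  exact (strictMonoOn_add_mul_log hβ.le).lt_iff_lt ht hm |>.mp hft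
end

section
/- The function φ(x) = 1 - (1/√(4πx)) ∫_ℝ tanh(u/2) · exp(-(u - x)²/(4x)) du, defined for x > 0 with φ(0) = 1, satisfies 0 < φ(x) < 1 for all x > 0. -/
open MeasureTheory

noncomputable def phi (x : ℝ) : ℝ :=
  if x = 0 then 1
  else 1 - (1 / Real.sqrt (4 * Real.pi * x)) *
    ∫ u : ℝ, Real.tanh (u / 2) * Real.exp (-(u - x) ^ 2 / (4 * x))

/-!
For `x > 0` the weight `exp (-(u - x)² / (4x)) / √(4πx)` is the density of `U ~ 𝓝(x, 2x)`, so
`φ(x) = 1 - 𝔼[tanh (U / 2)]`. Since `|tanh| < 1` and the density has total mass one,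
`𝔼[tanh (U / 2)] < 1`. Pairing `u` with `-u`, the odd function `tanh (u / 2)` is weighted by the
difference of the densities at `u` and `-u`, which for `u > 0` is positive because the mean `x`
is positive; hence `𝔼[tanh (U / 2)] > 0`.
-/

open Real ProbabilityTheory NNReal

theorem Real.continuous_tanh : Continuous tanh := by
  simp_rw [funext tanh_eq_sinh_div_cosh]
  exact continuous_sinh.div continuous_cosh fun t => (cosh_pos t).ne'

theorem Real.tanh_pos {t : ℝ} (ht : 0 < t) : 0 < tanh t := by
  rw [tanh_eq_sinh_div_cosh]
  exact div_pos (sinh_pos_iff.mpr ht) (cosh_pos t)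

theorem MeasureTheory.Integrable.tanh_half_mul {g : ℝ → ℝ} (hg : Integrable g) :
    Integrable fun u => tanh (u / 2) * g u :=
  hg.bdd_mul (c := 1) (continuous_tanh.comp (continuous_id.div_const 2)).aestronglyMeasurable
    (ae_of_all _ fun _ => (abs_tanh_lt_one _).le)

theorem integral_tanh_half_mul_lt {g : ℝ → ℝ} (hg : Integrable g) (hg_pos : ∀ u, 0 < g u) :
    ∫ u, tanh (u / 2) * g u < ∫ u, g u := by
  have h_pt : ∀ u, 0 < g u - tanh (u / 2) * g u := fun u => by
    nlinarith [tanh_lt_one (u / 2), hg_pos u]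
  have h_diff : 0 < ∫ u, (g u - tanh (u / 2) * g u) := by
    rw [integral_pos_iff_support_of_nonneg (fun u => (h_pt u).le) (hg.sub hg.tanh_half_mul),
      Function.support_eq_univ fun u => (h_pt u).ne']
    simp
  rw [integral_sub hg hg.tanh_half_mul] at h_diff
  linarith

theorem integral_pos_of_pos_add_comp_neg {h : ℝ → ℝ} (hh : Integrable h)
    (hpos : ∀ u, 0 < u → 0 < h u + h (-u)) : 0 < ∫ u, h u := by
  set k : ℝ → ℝ := fun u => h u + h (-u)
  have hk_int : Integrable k := hh.add hh.comp_neg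
  have hk_integral : ∫ u, k u = 2 * ∫ u, h u := by
    rw [integral_add hh hh.comp_neg, integral_neg_eq_self]
    ring
  -- `k` is even; only its sign at the null point `0` is not controlled by `hpos`.
  have hk_nonneg : 0 ≤ᵐ[volume] k := by
    filter_upwards [(Set.countable_singleton (0 : ℝ)).ae_notMem volume] with u hu
    rcases lt_or_gt_of_ne (show u ≠ 0 from hu) with hu | hu
    · have := hpos (-u) (neg_pos.2 hu)
      rw [neg_neg] at this
      exact (add_comm (h (-u)) (h u) ▸ this).le
    · exact (hpos u hu).le
  have hk_pos : 0 < ∫ u, k u := by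
    rw [integral_pos_iff_support_of_nonneg_ae hk_nonneg hk_int]
    calc (0 : ENNReal) < volume (Set.Ioi (0 : ℝ)) := by simp
      _ ≤ volume (Function.support k) := measure_mono fun u hu => (hpos u hu).ne'
  linarith

theorem gaussianPDFReal_neg_lt {μ : ℝ} {v : ℝ≥0} (hμ : 0 < μ) (hv : v ≠ 0) {u : ℝ}
    (hu : 0 < u) : gaussianPDFReal μ v (-u) < gaussianPDFReal μ v u := by
  simp only [gaussianPDFReal]
  refine mul_lt_mul_of_pos_left (exp_lt_exp.2 (div_lt_div_of_pos_right ?_ (by positivity)))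
    (by positivity)
  nlinarith

theorem integral_tanh_half_mul_gaussianPDFReal_pos {μ : ℝ} {v : ℝ≥0} (hμ : 0 < μ)
    (hv : v ≠ 0) : 0 < ∫ u, tanh (u / 2) * gaussianPDFReal μ v u := by
  refine integral_pos_of_pos_add_comp_neg (integrable_gaussianPDFReal μ v).tanh_half_mul
    fun u hu => ?_
  have := gaussianPDFReal_neg_lt hμ hv hu
  rw [neg_div, tanh_neg]
  nlinarith [tanh_pos (half_pos hu)]

theorem integral_tanh_half_mul_gaussianPDFReal_lt_one (μ : ℝ) {v : ℝ≥0} (hv : v ≠ 0) :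
    ∫ u, tanh (u / 2) * gaussianPDFReal μ v u < 1 :=
  integral_gaussianPDFReal_eq_one μ hv ▸
    integral_tanh_half_mul_lt (integrable_gaussianPDFReal μ v) (gaussianPDFReal_pos μ v · hv)

theorem phi_eq_one_sub_integral_gaussianPDFReal {x : ℝ} (hx : 0 < x) :
    phi x = 1 - ∫ u, tanh (u / 2) * gaussianPDFReal x (2 * x).toNNReal u := by
  rw [phi, if_neg hx.ne', ← integral_const_mul]
  congr 2 with u
  rw [gaussianPDFReal, Real.coe_toNNReal _ (by positivity)]
  ring_nf

theorem stmt_8 (x : ℝ) (hx : 0 < x) : 0 < phi x ∧ phi x < 1 := by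
  have hv : (2 * x).toNNReal ≠ 0 := by simpa using hx
  rw [phi_eq_one_sub_integral_gaussianPDFReal hx]
  exact ⟨sub_pos.2 (integral_tanh_half_mul_gaussianPDFReal_lt_one x hv),
    sub_lt_self 1 (integral_tanh_half_mul_gaussianPDFReal_pos hx hv)⟩
end

section
/- The function φ(x) = 1 - (1/√(4πx)) ∫_ℝ tanh(u/2) · exp(-(u - x)²/(4x)) du is continuous and strictly monotonically decreasing on (0, ∞), and tends to 0 as x → ∞. -/
open MeasureTheory

/-!
The substitution `u = x + 2 √x t` turns `φ x` into `1 - I (√x) / √π`, where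
`I s = ∫ tanh (s² / 2 + s t) exp (-t²) dt`. Differentiating under the integral sign and
integrating by parts against the Gaussian (`∫ t h(t) e^{-t²} = ½ ∫ h'(t) e^{-t²}`, applied to
`h = 1 - tanh²`) gives `I' s = s ∫ (1 - tanh²) (1 - tanh) e^{-t²} dt`, which is positive for
`s > 0`. As `s → ∞` the integrand tends to `e^{-t²}` pointwise, so by dominated convergence
`I s → √π` and `φ x → 0`.
-/

open Real Filter Set Topology

namespace Real

theorem hasDerivAt_tanh (x : ℝ) : HasDerivAt tanh (1 - tanh x ^ 2) x := by
  rw [show tanh = fun y => sinh y / cosh y from funext tanh_eq_sinh_div_cosh]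
  refine ((hasDerivAt_sinh x).div (hasDerivAt_cosh x) (cosh_pos x).ne').congr_deriv ?_
  field_simp

@[fun_prop]
theorem continuous_tanh_s9 : Continuous tanh :=
  continuous_iff_continuousAt.2 fun x => (hasDerivAt_tanh x).continuousAt

theorem tendsto_tanh_atTop : Tendsto tanh atTop (𝓝 1) := by
  have h : Tendsto (fun x => exp (-(2 * x))) atTop (𝓝 0) :=
    tendsto_exp_atBot.comp (tendsto_neg_atTop_atBot.comp (tendsto_id.const_mul_atTop two_pos))
  have key (x : ℝ) : tanh x = (1 - exp (-(2 * x))) / (1 + exp (-(2 * x))) := by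
    rw [tanh_eq, show -(2 * x) = -x + -x by ring, exp_add, exp_neg]
    field_simp
  have := ((tendsto_const_nhds (x := (1 : ℝ))).sub h).div
    ((tendsto_const_nhds (x := (1 : ℝ))).add h) (by norm_num)
  rw [funext key]
  simpa [Pi.div_def] using this

theorem one_sub_tanh_sq_pos (x : ℝ) : 0 < 1 - tanh x ^ 2 := sub_pos.2 (tanh_sq_lt_one x)

theorem abs_one_sub_tanh_sq_le_one (x : ℝ) : |1 - tanh x ^ 2| ≤ 1 :=
  abs_le.2 ⟨by linarith [one_sub_tanh_sq_pos x], by linarith [sq_nonneg (tanh x)]⟩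

theorem hasDerivAt_tanh_add_mul (c s t : ℝ) :
    HasDerivAt (fun t => tanh (c + s * t)) ((1 - tanh (c + s * t) ^ 2) * s) t := by
  refine ((hasDerivAt_tanh _).comp t
    (((hasDerivAt_id t).const_mul s).const_add c)).congr_deriv ?_
  simp only [mul_one, id]

end Real

theorem integrable_mul_exp_neg_sq_of_abs_le {f : ℝ → ℝ} (hf : Continuous f) {a b : ℝ}
    (h : ∀ t, |f t| ≤ a + b * |t|) : Integrable fun t => f t * exp (-t ^ 2) := by
  have habs : Integrable fun t : ℝ => |t| * exp (-t ^ 2) := by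
    simpa [abs_mul] using (integrable_mul_exp_neg_mul_sq one_pos).abs
  have hg : Integrable fun t : ℝ => (a + b * |t|) * exp (-t ^ 2) := by
    refine (((integrable_exp_neg_mul_sq one_pos).const_mul a).add (habs.const_mul b)).congr
      (Eventually.of_forall fun t => ?_)
    simp only [Pi.add_apply]
    ring_nf
  refine hg.mono' (by fun_prop) (Eventually.of_forall fun t => ?_)
  rw [norm_mul, norm_of_nonneg (exp_pos _).le, norm_eq_abs]
  exact mul_le_mul_of_nonneg_right (h t) (exp_pos _).le

theorem integral_mul_mul_exp_neg_sq_eq_integral_deriv_div_two {h h' : ℝ → ℝ}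
    (hd : ∀ t, HasDerivAt h (h' t) t)
    (hi : Integrable fun t => h t * exp (-t ^ 2))
    (hi' : Integrable fun t => h' t * exp (-t ^ 2))
    (hti : Integrable fun t => t * h t * exp (-t ^ 2)) :
    ∫ t, t * h t * exp (-t ^ 2) = (∫ t, h' t * exp (-t ^ 2)) / 2 := by
  have hG (t : ℝ) : HasDerivAt (fun t => h t * exp (-t ^ 2))
      (h' t * exp (-t ^ 2) - 2 * (t * h t * exp (-t ^ 2))) t := by
    refine ((hd t).mul ((hasDerivAt_pow 2 t).fun_neg.exp)).congr_deriv ?_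
    ring
  have := integral_eq_zero_of_hasDerivAt_of_integrable hG (hi'.sub (hti.const_mul 2)) hi
  rw [integral_sub hi' (hti.const_mul 2), integral_const_mul] at this
  linarith

noncomputable def tanhGaussIntegral (s : ℝ) : ℝ :=
  ∫ t, tanh (s ^ 2 / 2 + s * t) * exp (-t ^ 2)

theorem hasDerivAt_tanh_sq_div_two_add_mul (s t : ℝ) :
    HasDerivAt (fun s => tanh (s ^ 2 / 2 + s * t))
      ((s + t) * (1 - tanh (s ^ 2 / 2 + s * t) ^ 2)) s := by
  refine ((hasDerivAt_tanh _).comp s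
    (((hasDerivAt_pow 2 s).div_const 2).fun_add ((hasDerivAt_id s).mul_const t))).congr_deriv ?_
  simp only [id]
  ring

theorem hasDerivAt_tanhGaussIntegral (s₀ : ℝ) :
    HasDerivAt tanhGaussIntegral
      (∫ t, (s₀ + t) * (1 - tanh (s₀ ^ 2 / 2 + s₀ * t) ^ 2) * exp (-t ^ 2)) s₀ := by
  have hbound (t : ℝ) (s : ℝ) (hs : s ∈ Metric.ball s₀ 1) :
      ‖(s + t) * (1 - tanh (s ^ 2 / 2 + s * t) ^ 2) * exp (-t ^ 2)‖ ≤
        (|s₀| + 1 + |t|) * exp (-t ^ 2) := by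
    have hs' : |s| ≤ |s₀| + 1 := by
      have := abs_sub_abs_le_abs_sub s s₀
      rw [Metric.mem_ball, dist_eq] at hs
      linarith
    rw [norm_mul, norm_mul, norm_of_nonneg (exp_pos _).le, norm_eq_abs, norm_eq_abs]
    gcongr
    calc |s + t| * |1 - tanh (s ^ 2 / 2 + s * t) ^ 2| ≤ |s + t| * 1 := by
          gcongr; exact abs_one_sub_tanh_sq_le_one _
      _ ≤ |s₀| + 1 + |t| := by linarith [abs_add_le s t]
  have hF_int : Integrable fun t => tanh (s₀ ^ 2 / 2 + s₀ * t) * exp (-t ^ 2) :=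
    integrable_mul_exp_neg_sq_of_abs_le (by fun_prop) (a := 1) (b := 0) fun t => by
      simpa using (abs_tanh_lt_one _).le
  have hbound_int : Integrable fun t => (|s₀| + 1 + |t|) * exp (-t ^ 2) :=
    integrable_mul_exp_neg_sq_of_abs_le (by fun_prop) (a := |s₀| + 1) (b := 1) fun t => by
      rw [abs_of_nonneg (by positivity), one_mul]
  exact (hasDerivAt_integral_of_dominated_loc_of_deriv_le (Metric.ball_mem_nhds s₀ one_pos)
    (Eventually.of_forall fun s => (by fun_prop : Continuous _).aestronglyMeasurable) hF_int
    (by fun_prop : Continuous _).aestronglyMeasurable (Eventually.of_forall hbound) hbound_int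
    (Eventually.of_forall fun t s _ =>
      (hasDerivAt_tanh_sq_div_two_add_mul s t).mul_const _)).2

section TanhAffine

variable (c s : ℝ)

theorem integrable_one_sub_tanh_sq_mul_exp_neg_sq :
    Integrable fun t => (1 - tanh (c + s * t) ^ 2) * exp (-t ^ 2) :=
  integrable_mul_exp_neg_sq_of_abs_le (by fun_prop) (a := 1) (b := 0) fun t => by
    simpa using abs_one_sub_tanh_sq_le_one _

theorem integrable_tanh_mul_one_sub_tanh_sq_mul_exp_neg_sq :
    Integrable fun t => tanh (c + s * t) * (1 - tanh (c + s * t) ^ 2) * exp (-t ^ 2) :=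
  integrable_mul_exp_neg_sq_of_abs_le (by fun_prop) (a := 1) (b := 0) fun t => by
    rw [abs_mul, zero_mul, add_zero]
    exact mul_le_one₀ (abs_tanh_lt_one _).le (abs_nonneg _) (abs_one_sub_tanh_sq_le_one _)

theorem integrable_mul_one_sub_tanh_sq_mul_exp_neg_sq :
    Integrable fun t => t * (1 - tanh (c + s * t) ^ 2) * exp (-t ^ 2) :=
  integrable_mul_exp_neg_sq_of_abs_le (by fun_prop) (a := 0) (b := 1) fun t => by
    rw [abs_mul, zero_add, one_mul]
    exact mul_le_of_le_one_right (abs_nonneg t) (abs_one_sub_tanh_sq_le_one _)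

theorem integral_mul_one_sub_tanh_sq_mul_exp_neg_sq :
    ∫ t, t * (1 - tanh (c + s * t) ^ 2) * exp (-t ^ 2) =
      -(s * ∫ t, tanh (c + s * t) * (1 - tanh (c + s * t) ^ 2) * exp (-t ^ 2)) := by
  set T : ℝ → ℝ := fun t => tanh (c + s * t)
  have hd (t : ℝ) : HasDerivAt (fun t => 1 - T t ^ 2) (-(2 * T t * ((1 - T t ^ 2) * s))) t := by
    simpa using ((hasDerivAt_tanh_add_mul c s t).pow 2).const_sub 1
  have hi' : Integrable fun t => -(2 * T t * ((1 - T t ^ 2) * s)) * exp (-t ^ 2) := by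
    refine ((integrable_tanh_mul_one_sub_tanh_sq_mul_exp_neg_sq c s).const_mul (-2 * s)).congr
      (Eventually.of_forall fun t => ?_)
    ring
  rw [integral_mul_mul_exp_neg_sq_eq_integral_deriv_div_two hd
      (integrable_one_sub_tanh_sq_mul_exp_neg_sq c s) hi'
      (integrable_mul_one_sub_tanh_sq_mul_exp_neg_sq c s),
    ← integral_const_mul, ← integral_neg, ← integral_div]
  congr 1; ext t; ring

end TanhAffine

theorem deriv_tanhGaussIntegral (s : ℝ) :
    deriv tanhGaussIntegral s =
      s * ∫ t, (1 - tanh (s ^ 2 / 2 + s * t) ^ 2) * (1 - tanh (s ^ 2 / 2 + s * t)) *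
        exp (-t ^ 2) := by
  rw [(hasDerivAt_tanhGaussIntegral s).deriv]
  have hi := integrable_one_sub_tanh_sq_mul_exp_neg_sq (s ^ 2 / 2) s
  set T : ℝ → ℝ := fun t => tanh (s ^ 2 / 2 + s * t)
  calc ∫ t, (s + t) * (1 - T t ^ 2) * exp (-t ^ 2)
      = ∫ t, (s * ((1 - T t ^ 2) * exp (-t ^ 2)) + t * (1 - T t ^ 2) * exp (-t ^ 2)) := by
        congr 1; ext t; ring
    _ = s * (∫ t, (1 - T t ^ 2) * exp (-t ^ 2)) -
          s * ∫ t, T t * (1 - T t ^ 2) * exp (-t ^ 2) := by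
        rw [integral_add (hi.const_mul s)
            (integrable_mul_one_sub_tanh_sq_mul_exp_neg_sq (s ^ 2 / 2) s),
          integral_const_mul, integral_mul_one_sub_tanh_sq_mul_exp_neg_sq, sub_eq_add_neg]
    _ = s * ∫ t, (1 - T t ^ 2) * (1 - T t) * exp (-t ^ 2) := by
        rw [← mul_sub, ← integral_sub hi
          (integrable_tanh_mul_one_sub_tanh_sq_mul_exp_neg_sq (s ^ 2 / 2) s)]
        congr 2; ext t; ring

theorem integral_one_sub_tanh_sq_mul_one_sub_tanh_pos (s : ℝ) :
    0 < ∫ t, (1 - tanh (s ^ 2 / 2 + s * t) ^ 2) * (1 - tanh (s ^ 2 / 2 + s * t)) *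
      exp (-t ^ 2) := by
  have hpos (t : ℝ) : 0 < (1 - tanh (s ^ 2 / 2 + s * t) ^ 2) * (1 - tanh (s ^ 2 / 2 + s * t)) *
      exp (-t ^ 2) :=
    mul_pos (mul_pos (one_sub_tanh_sq_pos _) (sub_pos.2 (tanh_lt_one _))) (exp_pos _)
  refine integral_pos_of_integrable_nonneg_nonzero (x := 0) (by fun_prop) ?_
    (fun t => (hpos t).le) (hpos 0).ne'
  refine integrable_mul_exp_neg_sq_of_abs_le (by fun_prop) (a := 1 * 2) (b := 0) fun t => ?_
  rw [abs_mul, zero_mul, add_zero]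
  refine mul_le_mul (abs_one_sub_tanh_sq_le_one _) ?_ (abs_nonneg _) zero_le_one
  linarith [abs_sub (1 : ℝ) (tanh (s ^ 2 / 2 + s * t)), abs_tanh_lt_one (s ^ 2 / 2 + s * t)]

theorem continuous_tanhGaussIntegral : Continuous tanhGaussIntegral :=
  continuous_iff_continuousAt.2 fun s => (hasDerivAt_tanhGaussIntegral s).continuousAt

theorem strictMonoOn_tanhGaussIntegral : StrictMonoOn tanhGaussIntegral (Ici 0) := by
  refine strictMonoOn_of_deriv_pos (convex_Ici 0) continuous_tanhGaussIntegral.continuousOn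
    fun s hs => ?_
  rw [interior_Ici] at hs
  rw [deriv_tanhGaussIntegral]
  exact mul_pos hs (integral_one_sub_tanh_sq_mul_one_sub_tanh_pos s)

theorem tendsto_tanhGaussIntegral_atTop : Tendsto tanhGaussIntegral atTop (𝓝 √π) := by
  have hgauss : ∫ t : ℝ, exp (-t ^ 2) = √π := by simpa using integral_gaussian 1
  rw [← hgauss]
  refine tendsto_integral_filter_of_dominated_convergence (fun t => exp (-t ^ 2))
    (Eventually.of_forall fun s => (by fun_prop : Continuous _).aestronglyMeasurable)
    (Eventually.of_forall fun s => Eventually.of_forall fun t => ?_)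
    (by simpa using integrable_exp_neg_mul_sq one_pos) (Eventually.of_forall fun t => ?_)
  · rw [norm_mul, norm_of_nonneg (exp_pos _).le, norm_eq_abs]
    exact mul_le_of_le_one_left (exp_pos _).le (abs_tanh_lt_one _).le
  · have harg : Tendsto (fun s : ℝ => s ^ 2 / 2 + s * t) atTop atTop := by
      refine (tendsto_id.atTop_mul_atTop₀
        ((tendsto_id.atTop_div_const two_pos).atTop_add (tendsto_const_nhds (x := t)))).congr
        fun s => ?_
      simp only [id]
      ring
    simpa using (tendsto_tanh_atTop.comp harg).mul_const (exp (-t ^ 2))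

theorem phi_eq_of_pos {x : ℝ} (hx : 0 < x) : phi x = 1 - tanhGaussIntegral √x / √π := by
  obtain ⟨r, hr, rfl⟩ : ∃ r, 0 < r ∧ x = r ^ 2 := ⟨√x, sqrt_pos.2 hx, (sq_sqrt hx.le).symm⟩
  set f : ℝ → ℝ := fun u => tanh (u / 2) * exp (-(u - r ^ 2) ^ 2 / (4 * r ^ 2))
  have hsubst : ∫ u, f u = 2 * r * tanhGaussIntegral r := by
    have h := Measure.integral_comp_mul_left (fun u => f (u + r ^ 2)) (2 * r)
    rw [integral_add_right_eq_self f (r ^ 2), abs_of_pos (by positivity), smul_eq_mul] at h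
    rw [← mul_inv_cancel_left₀ (by positivity : 2 * r ≠ 0) (∫ u, f u), ← h, tanhGaussIntegral]
    congr 2; ext t
    simp only [f]
    congr 2
    · ring
    · field_simp; ring
  have hsqrt : √(4 * π * r ^ 2) = 2 * r * √π := by
    rw [show 4 * π * r ^ 2 = (2 * r) ^ 2 * π by ring, sqrt_mul (by positivity),
      sqrt_sq (by positivity)]
  rw [phi, if_neg (by positivity), hsubst, hsqrt, sqrt_sq hr.le]
  field_simp

theorem stmt_9 :
    ContinuousOn phi (Set.Ioi 0) ∧ StrictAntiOn phi (Set.Ioi 0) ∧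
      Filter.Tendsto phi Filter.atTop (nhds 0) := by
  have hphi : EqOn phi (fun x => 1 - tanhGaussIntegral √x / √π) (Ioi 0) :=
    fun x hx => phi_eq_of_pos hx
  refine ⟨ContinuousOn.congr ?_ hphi, fun x hx y hy hxy => ?_, ?_⟩
  · exact (continuous_const.sub
      ((continuous_tanhGaussIntegral.comp continuous_sqrt).div_const _)).continuousOn
  · rw [hphi hx, hphi hy]
    have hlt := strictMonoOn_tanhGaussIntegral (sqrt_nonneg x) (sqrt_nonneg y)
      (sqrt_lt_sqrt hx.le hxy)
    exact sub_lt_sub_left (div_lt_div_of_pos_right hlt (sqrt_pos.2 pi_pos)) 1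
  · have hlim :=
      ((tendsto_tanhGaussIntegral_atTop.comp tendsto_sqrt_atTop).div_const √π).const_sub 1
    rw [div_self (sqrt_pos.2 pi_pos).ne', sub_self] at hlim
    exact hlim.congr' (eventuallyEq_of_mem (Ioi_mem_atTop 0) hphi).symm
end
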